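/- arXiv:1907.01087 — 4 statements merged into one kernel-verified Lean document; each statement's English description precedes it below -/
import Mathlib

section
/- The quadratic form a ↦ B(a,a) on ℝ⁵ is not negative definite: there exists a nonzero vector a ∈ ℝ⁵ with B(a,a) ≥ 0 (indeed B(∇,∇) = 0 for the nonzero vector ∇ = (2,1,1,0,0)). -/
open Matrix

/-- The Gram matrix of the intersection form on the subspace of `ℤ₂`-invariant cycles
in the Milnor fibre of `x₁⁴ + x₂⁴ + y₁²` (the singularity `M₅`), regarded over `ℝ`. -/
def G : Matrix (Fin 5) (Fin 5) ℝ :=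
  !![-2,  2,  2, -2, -2;
      2, -4,  0,  2,  2;
      2,  0, -4,  2,  2;
     -2,  2,  2, -4,  0;
     -2,  2,  2,  0, -4]

/-- The associated symmetric bilinear form `B(u,v) = uᵀGv` on `ℝ⁵`. -/
def B (u v : Fin 5 → ℝ) : ℝ := u ⬝ᵥ G.mulVec v

/-- The quadratic form `a ↦ B(a,a)` on `ℝ⁵` is not negative definite: there exists a
nonzero vector `a` with `B(a,a) ≥ 0`; indeed `B(∇,∇) = 0` for the nonzero vector
`∇ = (2,1,1,0,0)`. -/
theorem form_not_negative_definite :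
    ((![2, 1, 1, 0, 0] : Fin 5 → ℝ) ≠ 0 ∧ B ![2, 1, 1, 0, 0] ![2, 1, 1, 0, 0] = 0) ∧
      ∃ a : Fin 5 → ℝ, a ≠ 0 ∧ 0 ≤ B a a := by
  have hne : (![2, 1, 1, 0, 0] : Fin 5 → ℝ) ≠ 0 := by
    intro h
    have := congrFun h 0
    simp at this
  have hB : B ![2, 1, 1, 0, 0] ![2, 1, 1, 0, 0] = 0 := by
    simp [B, G, dotProduct, mulVec, Fin.sum_univ_five]
    norm_num
  exact ⟨⟨hne, hB⟩, ![2, 1, 1, 0, 0], hne, hB.ge⟩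
end

section
/- Let V be a vector space over ℚ with a symmetric bilinear form B, and let u, v ∈ V satisfy B(u,u) = B(v,v) = −2 and B(u,v) = 0. Define the Picard–Lefschetz operators H_u(a) = a + B(a,u)·u and H_v(a) = a + B(a,v)·v. Then for every a ∈ V with B(a,u) = B(a,v) one has H_v(H_u(a)) = a + (B(a, u+v)/2)·(u+v); in particular, on the subspace {a : B(a,u) = B(a,v)} the composition H_v∘H_u acts as the reflection in the vector u+v, which satisfies B(u+v, u+v) = −4. -/
/-- Let `V` be a `ℚ`-vector space with a symmetric bilinear form `B`, and let `u, v ∈ V`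
satisfy `B(u,u) = B(v,v) = −2` and `B(u,v) = 0`. Define the Picard–Lefschetz operators
`H_u(a) = a + B(a,u)·u` and `H_v(a) = a + B(a,v)·v`. Then for every `a ∈ V` with
`B(a,u) = B(a,v)` one has `H_v(H_u(a)) = a + (B(a,u+v)/2)·(u+v)`; in particular, on the
subspace `{a : B(a,u) = B(a,v)}` the composition `H_v∘H_u` acts as the reflection in the
vector `u+v`, which satisfies `B(u+v,u+v) = −4`. -/
theorem picard_lefschetz_composition (V : Type*) [AddCommGroup V] [Module ℚ V]
    (B : V →ₗ[ℚ] V →ₗ[ℚ] ℚ) (hB : ∀ x y : V, B x y = B y x)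
    (u v : V) (huu : B u u = -2) (hvv : B v v = -2) (huv : B u v = 0) :
    (∀ a : V, B a u = B a v →
        (fun b => b + B b v • v) ((fun b => b + B b u • u) a) =
          a + (B a (u + v) / 2) • (u + v)) ∧
      B (u + v) (u + v) = -4 := by
  constructor
  · intro a h
    simp only [map_add, map_smul, LinearMap.add_apply, LinearMap.smul_apply,
      smul_eq_mul, huv, hB u v] at *
    rw [h]
    module
  · simp [map_add, huu, hvv, huv, hB v u, huv]
    linarith [hB v u, huv]
end

section
/- Every homogeneous polynomial P of degree 4 in two variables x₁, x₂ over ℂ which is a product of four pairwise non-proportional linear forms (a non-degenerate binary quartic) can be brought by an invertible linear change of variables to the form x₁⁴ + x₂⁴ + a·x₁²x₂² for some a ∈ ℂ with a² ≠ 4; that is, there exist g ∈ GL₂(ℂ) and a ∈ ℂ with a² ≠ 4 such that P(g·(x₁,x₂)) = x₁⁴ + x₂⁴ + a·x₁²x₂². -/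
open MvPolynomial

private lemma det_mul_det (m00 m01 m10 m11 u0 u1 v0 v1 : ℂ) :
    (m00*u0+m01*u1)*(m10*v0+m11*v1) - (m10*u0+m11*u1)*(m00*v0+m01*v1)
      = (m00*m11 - m01*m10)*(u0*v1 - u1*v0) := by ring

private lemma scalar_id (c0 c1 c2 c3 d0 d1 d2 d3 a x y : ℂ)
    (hc : c0*c1*c2*c3 = 1) (hd : d0*d1*d2*d3 = 1)
    (h3 : d0*c1*c2*c3 + c0*d1*c2*c3 + c0*c1*d2*c3 + c0*c1*c2*d3 = 0)
    (h1 : c0*d1*d2*d3 + d0*c1*d2*d3 + d0*d1*c2*d3 + d0*d1*d2*c3 = 0)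
    (ha : a = c0*c1*d2*d3 + c0*d1*c2*d3 + c0*d1*d2*c3 + d0*c1*c2*d3 + d0*c1*d2*c3 + d0*d1*c2*c3) :
    (c0*x+d0*y)*(c1*x+d1*y)*(c2*x+d2*y)*(c3*x+d3*y) = x^4+y^4+a*x^2*y^2 := by
  linear_combination x^4*hc + y^4*hd + x^3*y*h3 + x*y^3*h1 - x^2*y^2*ha

private lemma a_sq_ne_four (c0 c1 c2 d0 d1 d2 a : ℂ)
    (hc2 : c2 ≠ 0) (hd0 : d0 ≠ 0) (hd1 : d1 ≠ 0)
    (h01 : c0*d1 - d0*c1 ≠ 0) (h02 : c0*d2 - d0*c2 ≠ 0) (h12 : c1*d2 - d1*c2 ≠ 0)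
    (e0 : d0^4 + c0^4 + a*d0^2*c0^2 = 0)
    (e1 : d1^4 + c1^4 + a*d1^2*c1^2 = 0)
    (e2 : d2^4 + c2^4 + a*d2^2*c2^2 = 0) :
    a^2 ≠ 4 := by
  intro hsq
  have k0 : 2*d0^2 + a*c0^2 = 0 := by
    have k : (2*d0^2 + a*c0^2)^2 = 0 := by linear_combination 4*e0 + c0^4*hsq
    exact sq_eq_zero_iff.mp k
  have k1 : 2*d1^2 + a*c1^2 = 0 := by
    have k : (2*d1^2 + a*c1^2)^2 = 0 := by linear_combination 4*e1 + c1^4*hsq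
    exact sq_eq_zero_iff.mp k
  have k2 : 2*d2^2 + a*c2^2 = 0 := by
    have k : (2*d2^2 + a*c2^2)^2 = 0 := by linear_combination 4*e2 + c2^4*hsq
    exact sq_eq_zero_iff.mp k
  have p01 : c0*d1 + c1*d0 = 0 := by
    have hm : (c0*d1 - d0*c1)*(c0*d1 + c1*d0) = 0 := by
      linear_combination (c0^2/2)*k1 - (c1^2/2)*k0
    rcases mul_eq_zero.mp hm with h | h
    · exact absurd h h01
    · exact h
  have p02 : c0*d2 + c2*d0 = 0 := by
    have hm : (c0*d2 - d0*c2)*(c0*d2 + c2*d0) = 0 := by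
      linear_combination (c0^2/2)*k2 - (c2^2/2)*k0
    rcases mul_eq_zero.mp hm with h | h
    · exact absurd h h02
    · exact h
  have p12 : c1*d2 + c2*d1 = 0 := by
    have hm : (c1*d2 - d1*c2)*(c1*d2 + c2*d1) = 0 := by
      linear_combination (c1^2/2)*k2 - (c2^2/2)*k1
    rcases mul_eq_zero.mp hm with h | h
    · exact absurd h h12
    · exact h
  have hzero : c2 * (d0 * d1) = 0 := by
    linear_combination (-(d2)/2)*p01 + (d1/2)*p02 + (d0/2)*p12
  exact mul_ne_zero hc2 (mul_ne_zero hd0 hd1) hzero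

/-- Every homogeneous polynomial of degree 4 in two variables over `ℂ` which is a product
of four pairwise non-proportional linear forms (a non-degenerate binary quartic) can be
brought by an invertible linear change of variables to the form
`x₁⁴ + x₂⁴ + a·x₁²x₂²` for some `a ∈ ℂ` with `a² ≠ 4`. -/
theorem nondegenerate_binary_quartic_normal_form
    (P : MvPolynomial (Fin 2) ℂ) (hP : P.IsHomogeneous 4)
    (L : Fin 4 → Fin 2 → ℂ)
    (hL : ∀ i j : Fin 4, i ≠ j → L i 0 * L j 1 - L i 1 * L j 0 ≠ 0)
    (hfact : P = ∏ i : Fin 4, (C (L i 0) * X 0 + C (L i 1) * X 1)) :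
    ∃ (g : GL (Fin 2) ℂ) (a : ℂ), a ^ 2 ≠ 4 ∧
      aeval (fun i : Fin 2 => C ((g : Matrix (Fin 2) (Fin 2) ℂ) i 0) * X 0 +
          C ((g : Matrix (Fin 2) (Fin 2) ℂ) i 1) * X 1) P =
        X 0 ^ 4 + X 1 ^ 4 + C a * X 0 ^ 2 * X 1 ^ 2 := by
  have h23 : L 2 0 * L 3 1 - L 2 1 * L 3 0 ≠ 0 := hL 2 3 (by decide)
  set Δ : ℂ := L 0 0 * L 1 1 - L 0 1 * L 1 0 with hΔdef
  set q0 : ℂ := L 2 0 * L 1 1 - L 2 1 * L 1 0 with hq0def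
  set q1 : ℂ := L 0 0 * L 2 1 - L 0 1 * L 2 0 with hq1def
  set r0 : ℂ := L 3 0 * L 1 1 - L 3 1 * L 1 0 with hr0def
  set r1 : ℂ := L 0 0 * L 3 1 - L 0 1 * L 3 0 with hr1def
  have hΔ : Δ ≠ 0 := hL 0 1 (by decide)
  have hq0 : q0 ≠ 0 := hL 2 1 (by decide)
  have hq1 : q1 ≠ 0 := hL 0 2 (by decide)
  have hr0 : r0 ≠ 0 := hL 3 1 (by decide)
  have hr1 : r1 ≠ 0 := hL 0 3 (by decide)
  have hqr : q0 * r1 - q1 * r0 ≠ 0 := by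
    have hplucker : q0 * r1 - q1 * r0 = Δ * (L 2 0 * L 3 1 - L 2 1 * L 3 0) := by
      rw [hΔdef, hq0def, hq1def, hr0def, hr1def]; ring
    rw [hplucker]; exact mul_ne_zero hΔ h23
  -- square root b of q1 r1 / (q0 r0)
  obtain ⟨b, hbsq⟩ := IsAlgClosed.exists_pow_nat_eq (k := ℂ) (q1*r1/(q0*r0)) (n := 2) (by norm_num)
  have hb : b^2 * (q0*r0) = q1*r1 := by
    rw [hbsq, div_mul_cancel₀ _ (mul_ne_zero hq0 hr0)]
  have hbne : b ≠ 0 := by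
    intro h; rw [h] at hb
    exact (mul_ne_zero hq1 hr1) (by linear_combination -hb)
  -- the four auxiliary nonvanishing facts
  have hq2p : q1 + b*q0 ≠ 0 := by
    intro h
    have key : (b*q0)*(r1 + b*r0) = 0 := by linear_combination hb + r1*h
    rcases mul_eq_zero.mp key with h' | h'
    · exact (mul_ne_zero hbne hq0) h'
    · exact hqr (by linear_combination (-r0)*h + q0*h')
  have hq2m : q1 - b*q0 ≠ 0 := by
    intro h
    have key : (b*q0)*(b*r0 - r1) = 0 := by linear_combination hb + r1*h
    rcases mul_eq_zero.mp key with h' | h'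
    · exact (mul_ne_zero hbne hq0) h'
    · exact hqr (by linear_combination (-r0)*h + (-q0)*h')
  have hr2p : r1 + b*r0 ≠ 0 := by
    intro h
    have key : (b*r0)*(q1 + b*q0) = 0 := by linear_combination hb + q1*h
    rcases mul_eq_zero.mp key with h' | h'
    · exact (mul_ne_zero hbne hr0) h'
    · exact hqr (by linear_combination (-r0)*h' + q0*h)
  have hr2m : r1 - b*r0 ≠ 0 := by
    intro h
    have key : (b*r0)*(b*q0 - q1) = 0 := by linear_combination hb + q1*h
    rcases mul_eq_zero.mp key with h' | h'
    · exact (mul_ne_zero hbne hr0) h'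
    · exact hqr (by linear_combination q0*h + r0*h')
  -- fourth roots normalizing the two products
  obtain ⟨α, hα4⟩ := IsAlgClosed.exists_pow_nat_eq (k := ℂ)
      ((b*Δ^2*(q1+b*q0)*(r1+b*r0))⁻¹) (n := 4) (by norm_num)
  have hPc : b*Δ^2*(q1+b*q0)*(r1+b*r0) ≠ 0 :=
    mul_ne_zero (mul_ne_zero (mul_ne_zero hbne (pow_ne_zero 2 hΔ)) hq2p) hr2p
  have hα : α^4 * (b*Δ^2*(q1+b*q0)*(r1+b*r0)) = 1 := by
    rw [hα4, inv_mul_cancel₀ hPc]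
  have hαne : α ≠ 0 := by
    intro h; rw [h] at hα; simp at hα
  obtain ⟨β, hβ4⟩ := IsAlgClosed.exists_pow_nat_eq (k := ℂ)
      ((-(b*Δ^2*(q1-b*q0)*(r1-b*r0)))⁻¹) (n := 4) (by norm_num)
  have hPd : -(b*Δ^2*(q1-b*q0)*(r1-b*r0)) ≠ 0 :=
    neg_ne_zero.2 (mul_ne_zero (mul_ne_zero (mul_ne_zero hbne (pow_ne_zero 2 hΔ)) hq2m) hr2m)
  have hβ : β^4 * (-(b*Δ^2*(q1-b*q0)*(r1-b*r0))) = 1 := by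
    rw [hβ4, inv_mul_cancel₀ hPd]
  have hβne : β ≠ 0 := by
    intro h; rw [h] at hβ; simp at hβ
  -- entries of the transformation matrix (acting on the coefficient vectors)
  set n00 : ℂ := α*(L 0 1 - b*L 1 1) with hn00
  set n01 : ℂ := α*(b*L 1 0 - L 0 0) with hn01
  set n10 : ℂ := -(β*(b*L 1 1 + L 0 1)) with hn10
  set n11 : ℂ := β*(b*L 1 0 + L 0 0) with hn11
  -- the transformed coefficients, in closed form
  set c0 : ℂ := -(α*(b*Δ)) with hc0
  set c1 : ℂ := -(α*Δ) with hc1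
  set c2 : ℂ := -(α*(q1 + b*q0)) with hc2
  set c3 : ℂ := -(α*(r1 + b*r0)) with hc3
  set d0 : ℂ := -(β*(b*Δ)) with hd0
  set d1 : ℂ := β*Δ with hd1
  set d2 : ℂ := β*(q1 - b*q0) with hd2
  set d3 : ℂ := β*(r1 - b*r0) with hd3
  -- linking the closed forms to the matrix action
  have hlc0 : n00 * L 0 0 + n01 * L 0 1 = c0 := by
    rw [hn00, hn01, hc0, hΔdef]; ring
  have hlc1 : n00 * L 1 0 + n01 * L 1 1 = c1 := by
    rw [hn00, hn01, hc1, hΔdef]; ring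
  have hlc2 : n00 * L 2 0 + n01 * L 2 1 = c2 := by
    rw [hn00, hn01, hc2, hq0def, hq1def]; ring
  have hlc3 : n00 * L 3 0 + n01 * L 3 1 = c3 := by
    rw [hn00, hn01, hc3, hr0def, hr1def]; ring
  have hld0 : n10 * L 0 0 + n11 * L 0 1 = d0 := by
    rw [hn10, hn11, hd0, hΔdef]; ring
  have hld1 : n10 * L 1 0 + n11 * L 1 1 = d1 := by
    rw [hn10, hn11, hd1, hΔdef]; ring
  have hld2 : n10 * L 2 0 + n11 * L 2 1 = d2 := by
    rw [hn10, hn11, hd2, hq0def, hq1def]; ring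
  have hld3 : n10 * L 3 0 + n11 * L 3 1 = d3 := by
    rw [hn10, hn11, hd3, hr0def, hr1def]; ring
  -- coefficient conditions
  have Hc : c0*c1*c2*c3 = 1 := by
    rw [hc0, hc1, hc2, hc3]; linear_combination hα
  have Hd : d0*d1*d2*d3 = 1 := by
    rw [hd0, hd1, hd2, hd3]; linear_combination hβ
  have H3 : d0*c1*c2*c3 + c0*d1*c2*c3 + c0*c1*d2*c3 + c0*c1*c2*d3 = 0 := by
    rw [hc0, hc1, hc2, hc3, hd0, hd1, hd2, hd3]
    linear_combination (2*α^3*β*b*Δ^2)*hb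
  have H1 : c0*d1*d2*d3 + d0*c1*d2*d3 + d0*d1*c2*d3 + d0*d1*d2*c3 = 0 := by
    rw [hc0, hc1, hc2, hc3, hd0, hd1, hd2, hd3]
    linear_combination (-(2*α*β^3*b*Δ^2))*hb
  set aa : ℂ := c0*c1*d2*d3 + c0*d1*c2*d3 + c0*d1*d2*c3 + d0*c1*c2*d3 + d0*c1*d2*c3 + d0*d1*c2*c3
    with haa
  -- the universal scalar identity
  have Hid : ∀ x y : ℂ, (c0*x+d0*y)*(c1*x+d1*y)*(c2*x+d2*y)*(c3*x+d3*y)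
      = x^4+y^4+aa*x^2*y^2 := fun x y =>
    scalar_id c0 c1 c2 c3 d0 d1 d2 d3 aa x y Hc Hd H3 H1 haa
  -- nonvanishing of the individual coefficients
  have hc2ne : c2 ≠ 0 := by
    rw [hc2]; exact neg_ne_zero.2 (mul_ne_zero hαne hq2p)
  have hd0ne : d0 ≠ 0 := by
    rw [hd0]; exact neg_ne_zero.2 (mul_ne_zero hβne (mul_ne_zero hbne hΔ))
  have hd1ne : d1 ≠ 0 := by
    rw [hd1]; exact mul_ne_zero hβne hΔ
  -- pairwise determinants of the transformed forms
  have hdetN : n00*n11 - n01*n10 = -(2*α*β*b*Δ) := by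
    rw [hn00, hn01, hn10, hn11, hΔdef]; ring
  have hdetNne : n00*n11 - n01*n10 ≠ 0 := by
    rw [hdetN]
    exact neg_ne_zero.2 (mul_ne_zero (mul_ne_zero (mul_ne_zero
      (mul_ne_zero two_ne_zero hαne) hβne) hbne) hΔ)
  have pair : ∀ i j : Fin 4, i ≠ j →
      (n00 * L i 0 + n01 * L i 1)*(n10 * L j 0 + n11 * L j 1)
        - (n10 * L i 0 + n11 * L i 1)*(n00 * L j 0 + n01 * L j 1) ≠ 0 := by
    intro i j hij
    rw [det_mul_det]
    exact mul_ne_zero hdetNne (hL i j hij)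
  have pair01 : c0*d1 - d0*c1 ≠ 0 := by
    rw [← hlc0, ← hlc1, ← hld0, ← hld1]; exact pair 0 1 (by decide)
  have pair02 : c0*d2 - d0*c2 ≠ 0 := by
    rw [← hlc0, ← hlc2, ← hld0, ← hld2]; exact pair 0 2 (by decide)
  have pair12 : c1*d2 - d1*c2 ≠ 0 := by
    rw [← hlc1, ← hlc2, ← hld1, ← hld2]; exact pair 1 2 (by decide)
  -- the three vanishing evaluations
  have e0 : d0^4 + c0^4 + aa*d0^2*c0^2 = 0 := by
    have h := Hid d0 (-c0); linear_combination -h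
  have e1 : d1^4 + c1^4 + aa*d1^2*c1^2 = 0 := by
    have h := Hid d1 (-c1); linear_combination -h
  have e2 : d2^4 + c2^4 + aa*d2^2*c2^2 = 0 := by
    have h := Hid d2 (-c2); linear_combination -h
  have hane : aa^2 ≠ 4 :=
    a_sq_ne_four c0 c1 c2 d0 d1 d2 aa hc2ne hd0ne hd1ne pair01 pair02 pair12 e0 e1 e2
  -- build the GL element
  have hdetA : (!![n00, n10; n01, n11] : Matrix (Fin 2) (Fin 2) ℂ).det ≠ 0 := by
    rw [Matrix.det_fin_two_of]
    intro h
    exact hdetNne (by linear_combination h)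
  let g : GL (Fin 2) ℂ := Matrix.nonsingInvUnit _ (isUnit_iff_ne_zero.2 hdetA)
  have hg : (g : Matrix (Fin 2) (Fin 2) ℂ) = !![n00, n10; n01, n11] := rfl
  refine ⟨g, aa, hane, ?_⟩
  rw [hfact, map_prod, Fin.prod_univ_four]
  have F : ∀ (u0 u1 : ℂ),
      (aeval (fun i : Fin 2 => C ((g : Matrix (Fin 2) (Fin 2) ℂ) i 0) * X 0 +
        C ((g : Matrix (Fin 2) (Fin 2) ℂ) i 1) * X 1))
        (C u0 * X 0 + C u1 * X 1)
      = C (n00*u0 + n01*u1) * X 0 + C (n10*u0 + n11*u1) * X 1 := by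
    intro u0 u1
    have e00 : (g : Matrix (Fin 2) (Fin 2) ℂ) 0 0 = n00 := by rw [hg]; simp
    have e01 : (g : Matrix (Fin 2) (Fin 2) ℂ) 0 1 = n10 := by rw [hg]; simp
    have e10 : (g : Matrix (Fin 2) (Fin 2) ℂ) 1 0 = n01 := by rw [hg]; simp
    have e11 : (g : Matrix (Fin 2) (Fin 2) ℂ) 1 1 = n11 := by rw [hg]; simp
    simp only [map_add, map_mul, aeval_C, aeval_X, algebraMap_eq, e00, e01, e10, e11]
    ring
  rw [F (L 0 0) (L 0 1), F (L 1 0) (L 1 1), F (L 2 0) (L 2 1), F (L 3 0) (L 3 1),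
    hlc0, hlc1, hlc2, hlc3, hld0, hld1, hld2, hld3]
  apply MvPolynomial.funext
  intro x
  simp only [map_add, map_mul, map_pow, eval_C, eval_X]
  exact Hid (x 0) (x 1)
end

section
/- Let a ∈ ℂ with a² ≠ 4 and let f = x⁴ + y⁴ + a·x²y² ∈ ℂ[x,y], with Jacobian ideal J = (∂f/∂x, ∂f/∂y) = (4x³ + 2axy², 4y³ + 2ax²y). Then the quotient algebra A = ℂ[x,y]/J is a finite-dimensional ℂ-vector space of dimension 9, with basis the classes of the monomials 1, x, y, x², xy, y², x²y, xy², x²y²; the subspace of A invariant under the induced involution (x,y) ↦ (−x,−y) has dimension 5, with basis the classes of 1, x², xy, y², x²y²; and the subspace of A invariant under both induced involutions (x,y) ↦ (−x,y) and (x,y) ↦ (x,−y) has dimension 4, with basis the classes of 1, x², y², x²y². -/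
open MvPolynomial

/-- The polynomial `f = x⁴ + y⁴ + a·x²y²`. -/
noncomputable def f (a : ℂ) : MvPolynomial (Fin 2) ℂ :=
  X 0 ^ 4 + X 1 ^ 4 + C a * X 0 ^ 2 * X 1 ^ 2

/-- The Jacobian ideal `J = (∂f/∂x, ∂f/∂y)` of `f`. -/
noncomputable def J (a : ℂ) : Ideal (MvPolynomial (Fin 2) ℂ) :=
  Ideal.span {pderiv 0 (f a), pderiv 1 (f a)}

/-- The Jacobian (Milnor) algebra `A = ℂ[x,y]/J`. -/
abbrev A (a : ℂ) := MvPolynomial (Fin 2) ℂ ⧸ J a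

/-- The submodule of fixed points of a linear endomorphism. -/
def fixedPts {R M : Type*} [CommRing R] [AddCommGroup M] [Module R M]
    (φ : M →ₗ[R] M) : Submodule R M where
  carrier := {z | φ z = z}
  add_mem' := by
    intro x y hx hy
    simp only [Set.mem_setOf_eq, map_add] at *
    rw [hx, hy]
  zero_mem' := by simp
  smul_mem' := by
    intro c x hx
    simp only [Set.mem_setOf_eq, map_smul] at *
    rw [hx]

/-- The monomials `1, x, y, x², xy, y², x²y, xy², x²y²`. -/
noncomputable def mono₉ : Fin 9 → MvPolynomial (Fin 2) ℂ :=
  ![1, X 0, X 1, X 0 ^ 2, X 0 * X 1, X 1 ^ 2, X 0 ^ 2 * X 1, X 0 * X 1 ^ 2,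
    X 0 ^ 2 * X 1 ^ 2]

/-- The monomials `1, x², xy, y², x²y²`. -/
noncomputable def mono₅ : Fin 5 → MvPolynomial (Fin 2) ℂ :=
  ![1, X 0 ^ 2, X 0 * X 1, X 1 ^ 2, X 0 ^ 2 * X 1 ^ 2]

/-- The monomials `1, x², y², x²y²`. -/
noncomputable def mono₄ : Fin 4 → MvPolynomial (Fin 2) ℂ :=
  ![1, X 0 ^ 2, X 1 ^ 2, X 0 ^ 2 * X 1 ^ 2]


/-!
Writing `x, y` for the variables, the Jacobian ideal is generated by `4x³ + 2axy²` and
`4y³ + 2ax²y`. The identity `(16 - 4a²) x³y = 4y ∂ₓf - 2ax ∂ᵧf` (and its mirror image) puts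
`x³y` and `xy³` in `J` as soon as `a² ≠ 4`; together with `x³ ≡ -(a/2) xy²` and
`y³ ≡ -(a/2) x²y` this shows that the span of the monomials `xᵐyⁿ` with `m, n ≤ 2` is stable
under multiplication by `x` and `y`, hence is all of `A`. They are linearly independent because
each has a dual linear functional on `ℂ[x,y]` that vanishes on `J`: the coefficient of the
monomial itself, corrected in degrees 3 and 4 by multiples of the coefficients of `x³, y³, x⁴, y⁴`.
The three involutions act diagonally on this basis by the signs `(-1)ᵐ⁺ⁿ`, `(-1)ᵐ`, `(-1)ⁿ`, so
their fixed spaces are spanned by the basis vectors with sign `+1`.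
-/

section FixedPoints

variable {K M ι : Type*} [Field K] [AddCommGroup M] [Module K M]

theorem Module.Basis.repr_apply_of_apply_eq_smul (b : Module.Basis ι K M) {ψ : M →ₗ[K] M}
    {ε : ι → K} (hψ : ∀ i, ψ (b i) = ε i • b i) (z : M) (i : ι) :
    b.repr (ψ z) i = ε i * b.repr z i := by
  have : (b.coord i).comp ψ = ε i • b.coord i := b.ext fun j => by
    by_cases h : j = i <;> simp [hψ, h]
  exact LinearMap.congr_fun this z

theorem mem_fixedPts_iff_repr (b : Module.Basis ι K M) {ψ : M →ₗ[K] M}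
    {ε : ι → K} (hψ : ∀ i, ψ (b i) = ε i • b i) (z : M) :
    z ∈ fixedPts ψ ↔ ∀ i, b.repr z i ≠ 0 → ε i = 1 := by
  change ψ z = z ↔ _
  rw [b.ext_elem_iff]
  refine forall_congr' fun i => ?_
  rw [b.repr_apply_of_apply_eq_smul hψ, ← sub_eq_zero, ← sub_one_mul, mul_eq_zero,
    sub_eq_zero, or_iff_not_imp_right]

theorem fixedPts_eq_span_image (b : Module.Basis ι K M) {ψ : M →ₗ[K] M}
    {ε : ι → K} (hψ : ∀ i, ψ (b i) = ε i • b i) :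
    fixedPts ψ = Submodule.span K (b '' {i | ε i = 1}) := by
  ext z
  rw [mem_fixedPts_iff_repr b hψ, b.mem_span_image]
  simp [Set.subset_def]

theorem Module.Basis.span_image_inf_span_image (b : Module.Basis ι K M) (s t : Set ι) :
    Submodule.span K (b '' s) ⊓ Submodule.span K (b '' t) =
      Submodule.span K (b '' (s ∩ t)) := by
  ext z
  simp only [Submodule.mem_inf, b.mem_span_image, Set.subset_inter_iff]

theorem Module.Basis.finrank_eq_and_exists_basis_of_eq_span {κ : Type*} [Fintype κ]
    (b : Module.Basis ι K M) {g : κ → ι} (hg : Function.Injective g) {p : Submodule K M}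
    (hp : p = Submodule.span K (b '' Set.range g)) :
    Module.finrank K p = Fintype.card κ ∧ ∃ c : Module.Basis κ K p, ∀ k, (c k : M) = b (g k) := by
  rw [← Set.range_comp] at hp
  subst hp
  let c := Module.Basis.span (b.linearIndependent.comp g hg)
  exact ⟨Module.finrank_eq_card_basis c, c, fun k => by rw [Module.Basis.span_apply]; rfl⟩

end FixedPoints

theorem linearIndependent_mk_of_dual {ι K R : Type*} [Fintype ι] [DecidableEq ι] [CommRing K]
    [CommRing R] [Algebra K R] {I : Ideal R} (v : ι → R) (ℓ : ι → R →ₗ[K] K)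
    (hℓI : ∀ i, ∀ p ∈ I, ℓ i p = 0) (hℓv : ∀ i j, ℓ i (v j) = if j = i then 1 else 0) :
    LinearIndependent K (fun i => Ideal.Quotient.mk I (v i)) := by
  rw [Fintype.linearIndependent_iff]
  intro g hg i
  have hmem : ∑ j, g j • v j ∈ I := by
    rw [← Ideal.Quotient.eq_zero_iff_mem, ← Ideal.Quotient.mkₐ_eq_mk K, map_sum]
    simpa using hg
  simpa [hℓv] using hℓI i _ hmem

theorem span_eq_top_of_X_mul_mem {σ K ι : Type*} [CommRing K] {I : Ideal (MvPolynomial σ K)}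
    (v : ι → MvPolynomial σ K ⧸ I) (h1 : 1 ∈ Submodule.span K (Set.range v))
    (hX : ∀ i j, Ideal.Quotient.mk I (X i) * v j ∈ Submodule.span K (Set.range v)) :
    Submodule.span K (Set.range v) = ⊤ := by
  set S := Submodule.span K (Set.range v)
  have hXS (i : σ) : S ≤ S.comap (LinearMap.mulLeft K (Ideal.Quotient.mk I (X i))) :=
    Submodule.span_le.mpr (Set.range_subset_iff.mpr (hX i))
  rw [Submodule.eq_top_iff']
  intro z
  obtain ⟨p, rfl⟩ := Ideal.Quotient.mk_surjective z
  induction p using MvPolynomial.induction_on with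
  | C c =>
    rw [← MvPolynomial.algebraMap_eq, Ideal.Quotient.mk_algebraMap,
      Algebra.algebraMap_eq_smul_one]
    exact S.smul_mem c h1
  | add p q hp hq => simpa using add_mem hp hq
  | mul_X p i hp => simpa [mul_comm] using hXS i hp

theorem MvPolynomial.map_mul_eq_zero_of_monomial {σ K : Type*} [CommRing K]
    (ℓ : MvPolynomial σ K →ₗ[K] K) {g : MvPolynomial σ K} (h : ∀ d, ℓ (monomial d 1 * g) = 0)
    (u : MvPolynomial σ K) : ℓ (u * g) = 0 := by
  induction u using MvPolynomial.induction_on' with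
  | monomial d c =>
    rw [← mul_one c, ← smul_eq_mul (a := c), ← smul_monomial, smul_mul_assoc, map_smul, h,
      smul_zero]
  | add p q hp hq => rw [add_mul, map_add, hp, hq, add_zero]

section TwoVariables

variable {K : Type*} [CommRing K]

theorem monomial_single_add_single (m n : ℕ) :
    (monomial (Finsupp.single 0 m + Finsupp.single 1 n) 1 : MvPolynomial (Fin 2) K) =
      X 0 ^ m * X 1 ^ n := by
  rw [X_pow_eq_monomial, X_pow_eq_monomial, monomial_mul, one_mul]

theorem monomial_one_eq_X_pow_mul_X_pow (d : Fin 2 →₀ ℕ) :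
    (monomial d 1 : MvPolynomial (Fin 2) K) = X 0 ^ d 0 * X 1 ^ d 1 := by
  rw [← monomial_single_add_single]
  congr
  ext i; fin_cases i <;> simp

theorem aeval_smul_X_pow_mul_X_pow (u v : K) (m n : ℕ) :
    aeval (![u • X 0, v • X 1] : Fin 2 → MvPolynomial (Fin 2) K)
      (X 0 ^ m * X 1 ^ n : MvPolynomial (Fin 2) K) =
      (u ^ m * v ^ n) • (X 0 ^ m * X 1 ^ n) := by
  simp [smul_pow, smul_smul, mul_comm]

noncomputable def coeffXY (m n : ℕ) : MvPolynomial (Fin 2) K →ₗ[K] K :=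
  lcoeff K (Finsupp.single 0 m + Finsupp.single 1 n)

theorem coeffXY_X_pow_mul_X_pow (p q m n : ℕ) :
    coeffXY p q (X 0 ^ m * X 1 ^ n : MvPolynomial (Fin 2) K) =
      if m = p ∧ n = q then 1 else 0 := by
  rw [coeffXY, ← monomial_single_add_single, lcoeff_apply, coeff_monomial]
  congr 1
  simp [Finsupp.ext_iff, Fin.forall_fin_two]

end TwoVariables

def expo₉ : Fin 9 → ℕ × ℕ :=
  ![(0, 0), (1, 0), (0, 1), (2, 0), (1, 1), (0, 2), (2, 1), (1, 2), (2, 2)]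

theorem mono₉_eq (i : Fin 9) : mono₉ i = X 0 ^ (expo₉ i).1 * X 1 ^ (expo₉ i).2 := by
  fin_cases i <;> simp [mono₉, expo₉]

theorem expo₉_le (i : Fin 9) : (expo₉ i).1 ≤ 2 ∧ (expo₉ i).2 ≤ 2 := by
  revert i; decide

theorem exists_expo₉_eq {m n : ℕ} (hm : m ≤ 2) (hn : n ≤ 2) : ∃ i, expo₉ i = (m, n) := by
  have : ∀ m ≤ 2, ∀ n ≤ 2, ∃ i, expo₉ i = (m, n) := by decide
  exact this m hm n hn

section Jacobian

variable {a : ℂ}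

theorem pderiv_zero_f (a : ℂ) :
    pderiv 0 (f a) = (4 : ℂ) • X 0 ^ 3 + (2 * a) • (X 0 * X 1 ^ 2) := by
  simp only [f, map_add, Derivation.leibniz, Derivation.leibniz_pow, pderiv_X_self,
    pderiv_X_of_ne (show (1 : Fin 2) ≠ 0 by decide), derivation_C, smul_eq_mul, nsmul_eq_mul,
    smul_eq_C_mul, map_mul, map_ofNat C]
  ring

theorem pderiv_one_f (a : ℂ) :
    pderiv 1 (f a) = (4 : ℂ) • X 1 ^ 3 + (2 * a) • (X 0 ^ 2 * X 1) := by
  simp only [f, map_add, Derivation.leibniz, Derivation.leibniz_pow, pderiv_X_self,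
    pderiv_X_of_ne (show (0 : Fin 2) ≠ 1 by decide), derivation_C, smul_eq_mul, nsmul_eq_mul,
    smul_eq_C_mul, map_mul, map_ofNat C]
  ring

theorem pderiv_zero_f_mem_J (a : ℂ) : pderiv 0 (f a) ∈ J a := Ideal.subset_span (by simp)

theorem pderiv_one_f_mem_J (a : ℂ) : pderiv 1 (f a) ∈ J a := Ideal.subset_span (by simp)

theorem X_zero_pow_three_mul_X_one_mem_J (ha : a ^ 2 ≠ 4) :
    (X 0 ^ 3 * X 1 : MvPolynomial (Fin 2) ℂ) ∈ J a := by
  have hc : (16 - 4 * a ^ 2 : ℂ) ≠ 0 := fun h => ha (by linear_combination -h / 4)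
  rw [← Ideal.unit_mul_mem_iff_mem _ (hc.isUnit.map C)]
  have key : C (16 - 4 * a ^ 2) * (X 0 ^ 3 * X 1)
      = 4 * X 1 * pderiv 0 (f a) - 2 * C a * X 0 * pderiv 1 (f a) := by
    simp only [pderiv_zero_f, pderiv_one_f, smul_eq_C_mul, map_sub, map_mul, map_pow, map_ofNat]
    ring
  rw [key]
  exact sub_mem ((J a).mul_mem_left _ (pderiv_zero_f_mem_J a))
    ((J a).mul_mem_left _ (pderiv_one_f_mem_J a))

theorem X_zero_mul_X_one_pow_three_mem_J (ha : a ^ 2 ≠ 4) :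
    (X 0 * X 1 ^ 3 : MvPolynomial (Fin 2) ℂ) ∈ J a := by
  have hc : (16 - 4 * a ^ 2 : ℂ) ≠ 0 := fun h => ha (by linear_combination -h / 4)
  rw [← Ideal.unit_mul_mem_iff_mem _ (hc.isUnit.map C)]
  have key : C (16 - 4 * a ^ 2) * (X 0 * X 1 ^ 3)
      = 4 * X 0 * pderiv 1 (f a) - 2 * C a * X 1 * pderiv 0 (f a) := by
    simp only [pderiv_zero_f, pderiv_one_f, smul_eq_C_mul, map_sub, map_mul, map_pow, map_ofNat]
    ring
  rw [key]
  exact sub_mem ((J a).mul_mem_left _ (pderiv_one_f_mem_J a))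
    ((J a).mul_mem_left _ (pderiv_zero_f_mem_J a))

theorem mk_X_zero_pow_three (a : ℂ) :
    Ideal.Quotient.mk (J a) (X 0 ^ 3) = (-(a / 2)) • Ideal.Quotient.mk (J a) (X 0 * X 1 ^ 2) := by
  have h := Ideal.Quotient.eq_zero_iff_mem.mpr (pderiv_zero_f_mem_J a)
  rw [pderiv_zero_f, ← Ideal.Quotient.mkₐ_eq_mk ℂ, map_add, map_smul, map_smul] at h
  rw [← Ideal.Quotient.mkₐ_eq_mk ℂ]
  linear_combination (norm := module) (1 / 4 : ℂ) • h

theorem mk_X_one_pow_three (a : ℂ) :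
    Ideal.Quotient.mk (J a) (X 1 ^ 3) = (-(a / 2)) • Ideal.Quotient.mk (J a) (X 0 ^ 2 * X 1) := by
  have h := Ideal.Quotient.eq_zero_iff_mem.mpr (pderiv_one_f_mem_J a)
  rw [pderiv_one_f, ← Ideal.Quotient.mkₐ_eq_mk ℂ, map_add, map_smul, map_smul] at h
  rw [← Ideal.Quotient.mkₐ_eq_mk ℂ]
  linear_combination (norm := module) (1 / 4 : ℂ) • h

local notation "S" a => Submodule.span ℂ (Set.range fun i => Ideal.Quotient.mk (J a) (mono₉ i))

theorem mk_X_pow_mul_X_pow_mem_span (ha : a ^ 2 ≠ 4) {m n : ℕ} (hm : m ≤ 3) (hn : n ≤ 3) :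
    Ideal.Quotient.mk (J a) (X 0 ^ m * X 1 ^ n) ∈ S a := by
  have hJ {p} (hp : p ∈ J a) : Ideal.Quotient.mk (J a) p ∈ S a := by
    rw [Ideal.Quotient.eq_zero_iff_mem.mpr hp]; exact zero_mem _
  have hbasis {m n} (hm : m ≤ 2) (hn : n ≤ 2) :
      Ideal.Quotient.mk (J a) (X 0 ^ m * X 1 ^ n) ∈ S a := by
    obtain ⟨i, hi⟩ := exists_expo₉_eq hm hn
    exact Submodule.subset_span ⟨i, by simp [mono₉_eq, hi]⟩
  obtain ⟨hm, hn⟩ | ⟨rfl, rfl⟩ | ⟨rfl, rfl⟩ | ⟨rfl, hn⟩ | ⟨hm, rfl⟩ :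
      (m ≤ 2 ∧ n ≤ 2) ∨ (m = 3 ∧ n = 0) ∨ (m = 0 ∧ n = 3) ∨ (m = 3 ∧ 1 ≤ n) ∨ (1 ≤ m ∧ n = 3) := by
    omega
  · exact hbasis hm hn
  · rw [pow_zero, mul_one, mk_X_zero_pow_three]
    exact Submodule.smul_mem _ _ (by simpa using hbasis (m := 1) (n := 2) (by omega) le_rfl)
  · rw [pow_zero, one_mul, mk_X_one_pow_three]
    exact Submodule.smul_mem _ _ (by simpa using hbasis (m := 2) (n := 1) le_rfl (by omega))
  · obtain ⟨k, rfl⟩ := Nat.exists_eq_add_of_le' hn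
    refine hJ ?_
    convert (J a).mul_mem_left (X 1 ^ k) (X_zero_pow_three_mul_X_one_mem_J ha) using 1
    ring
  · obtain ⟨k, rfl⟩ := Nat.exists_eq_add_of_le' hm
    refine hJ ?_
    convert (J a).mul_mem_left (X 0 ^ k) (X_zero_mul_X_one_pow_three_mem_J ha) using 1
    ring

theorem span_mk_mono₉_eq_top (ha : a ^ 2 ≠ 4) : (S a) = ⊤ := by
  refine span_eq_top_of_X_mul_mem _ (Submodule.subset_span ⟨0, by simp [mono₉]⟩)
    (Fin.forall_fin_two.mpr ⟨fun j => ?_, fun j => ?_⟩) <;>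
  obtain ⟨hm, hn⟩ := expo₉_le j <;>
  rw [mono₉_eq, ← map_mul]
  · rw [← mul_assoc, ← pow_succ']
    exact mk_X_pow_mul_X_pow_mem_span ha (by omega) (by omega)
  · rw [mul_left_comm, ← pow_succ']
    exact mk_X_pow_mul_X_pow_mem_span ha (by omega) (by omega)

noncomputable def dualFunctional (a : ℂ) : Fin 9 → MvPolynomial (Fin 2) ℂ →ₗ[ℂ] ℂ :=
  ![coeffXY 0 0, coeffXY 1 0, coeffXY 0 1, coeffXY 2 0, coeffXY 1 1, coeffXY 0 2,
    coeffXY 2 1 - (a / 2) • coeffXY 0 3, coeffXY 1 2 - (a / 2) • coeffXY 3 0,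
    coeffXY 2 2 - (a / 2) • (coeffXY 4 0 + coeffXY 0 4)]

theorem dualFunctional_X_pow_mul_pderiv_zero (a : ℂ) (i : Fin 9) (m n : ℕ) :
    dualFunctional a i (X 0 ^ m * X 1 ^ n * pderiv 0 (f a)) = 0 := by
  have e : X 0 ^ m * X 1 ^ n * pderiv 0 (f a)
      = (4 : ℂ) • (X 0 ^ (m + 3) * X 1 ^ n) + (2 * a) • (X 0 ^ (m + 1) * X 1 ^ (n + 2)) := by
    simp only [pderiv_zero_f, smul_eq_C_mul]; ring
  rw [e, map_add, map_smul, map_smul]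
  fin_cases i <;> simp [dualFunctional, coeffXY_X_pow_mul_X_pow] <;> split_ifs <;>
    first | omega | ring

theorem dualFunctional_X_pow_mul_pderiv_one (a : ℂ) (i : Fin 9) (m n : ℕ) :
    dualFunctional a i (X 0 ^ m * X 1 ^ n * pderiv 1 (f a)) = 0 := by
  have e : X 0 ^ m * X 1 ^ n * pderiv 1 (f a)
      = (4 : ℂ) • (X 0 ^ m * X 1 ^ (n + 3)) + (2 * a) • (X 0 ^ (m + 2) * X 1 ^ (n + 1)) := by
    simp only [pderiv_one_f, smul_eq_C_mul]; ring
  rw [e, map_add, map_smul, map_smul]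
  fin_cases i <;> simp [dualFunctional, coeffXY_X_pow_mul_X_pow] <;> split_ifs <;>
    first | omega | ring

theorem dualFunctional_eq_zero_of_mem_J (a : ℂ) (i : Fin 9) {p : MvPolynomial (Fin 2) ℂ}
    (hp : p ∈ J a) : dualFunctional a i p = 0 := by
  obtain ⟨u, v, rfl⟩ := Ideal.mem_span_pair.mp hp
  rw [map_add, map_mul_eq_zero_of_monomial _ (fun d => ?_),
    map_mul_eq_zero_of_monomial _ (fun d => ?_), add_zero]
  · rw [monomial_one_eq_X_pow_mul_X_pow, dualFunctional_X_pow_mul_pderiv_one]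
  · rw [monomial_one_eq_X_pow_mul_X_pow, dualFunctional_X_pow_mul_pderiv_zero]

theorem dualFunctional_mono₉ (a : ℂ) (i j : Fin 9) :
    dualFunctional a i (mono₉ j) = if j = i then 1 else 0 := by
  rw [mono₉_eq]
  fin_cases i <;>
    simp only [dualFunctional, Fin.reduceFinMk, Matrix.cons_val, LinearMap.sub_apply,
      LinearMap.smul_apply, LinearMap.add_apply, coeffXY_X_pow_mul_X_pow] <;>
    fin_cases j <;> simp [expo₉]

noncomputable def jacobianBasis (ha : a ^ 2 ≠ 4) : Module.Basis (Fin 9) ℂ (A a) :=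
  Module.Basis.mk
    (linearIndependent_mk_of_dual _ _ (dualFunctional_eq_zero_of_mem_J a)
      (dualFunctional_mono₉ a))
    (span_mk_mono₉_eq_top ha).ge

theorem jacobianBasis_apply (ha : a ^ 2 ≠ 4) (i : Fin 9) :
    jacobianBasis ha i = Ideal.Quotient.mk (J a) (mono₉ i) :=
  Module.Basis.mk_apply _ _ _

theorem apply_mk_mono₉_eq_smul (φ : A a →ₐ[ℂ] A a) {u v : ℂ}
    (hφ : ∀ p, φ (Ideal.Quotient.mk (J a) p) =
      Ideal.Quotient.mk (J a) (aeval ![u • X 0, v • X 1] p)) (i : Fin 9) :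
    φ (Ideal.Quotient.mk (J a) (mono₉ i)) =
      (u ^ (expo₉ i).1 * v ^ (expo₉ i).2) • Ideal.Quotient.mk (J a) (mono₉ i) := by
  rw [hφ, mono₉_eq, aeval_smul_X_pow_mul_X_pow, ← Ideal.Quotient.mkₐ_eq_mk ℂ, map_smul]

end Jacobian

def index₅ : Fin 5 → Fin 9 := ![0, 3, 4, 5, 8]

def index₄ : Fin 4 → Fin 9 := ![0, 3, 5, 8]

theorem mono₅_eq (k : Fin 5) : mono₅ k = mono₉ (index₅ k) := by
  fin_cases k <;> rfl

theorem mono₄_eq (k : Fin 4) : mono₄ k = mono₉ (index₄ k) := by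
  fin_cases k <;> rfl

section Involutions

variable {a : ℂ}

theorem fixedPts_negXY_eq_span (ha : a ^ 2 ≠ 4) (φ : A a →ₐ[ℂ] A a)
    (hφ : ∀ p : MvPolynomial (Fin 2) ℂ,
      φ (Ideal.Quotient.mk (J a) p) = Ideal.Quotient.mk (J a) (aeval ![-X 0, -X 1] p)) :
    fixedPts φ.toLinearMap = Submodule.span ℂ (jacobianBasis ha '' Set.range index₅) := by
  replace hφ : ∀ p, φ (Ideal.Quotient.mk (J a) p) =
      Ideal.Quotient.mk (J a) (aeval ![(-1 : ℂ) • X 0, (-1 : ℂ) • X 1] p) := by simpa using hφ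
  rw [fixedPts_eq_span_image (jacobianBasis ha) (fun i => by
    simpa [jacobianBasis_apply] using apply_mk_mono₉_eq_smul φ hφ i)]
  congr 2
  ext i
  simp only [Set.mem_ofPred_eq, ← pow_add,
    neg_one_pow_eq_one_iff_even (by norm_num : (-1 : ℂ) ≠ 1)]
  revert i; decide

theorem fixedPts_negX_inf_fixedPts_negY_eq_span (ha : a ^ 2 ≠ 4) (φ₁ : A a →ₐ[ℂ] A a)
    (hφ₁ : ∀ p : MvPolynomial (Fin 2) ℂ,
      φ₁ (Ideal.Quotient.mk (J a) p) = Ideal.Quotient.mk (J a) (aeval ![-X 0, X 1] p))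
    (φ₂ : A a →ₐ[ℂ] A a)
    (hφ₂ : ∀ p : MvPolynomial (Fin 2) ℂ,
      φ₂ (Ideal.Quotient.mk (J a) p) = Ideal.Quotient.mk (J a) (aeval ![X 0, -X 1] p)) :
    fixedPts φ₁.toLinearMap ⊓ fixedPts φ₂.toLinearMap =
      Submodule.span ℂ (jacobianBasis ha '' Set.range index₄) := by
  replace hφ₁ : ∀ p, φ₁ (Ideal.Quotient.mk (J a) p) =
      Ideal.Quotient.mk (J a) (aeval ![(-1 : ℂ) • X 0, (1 : ℂ) • X 1] p) := by simpa using hφ₁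
  replace hφ₂ : ∀ p, φ₂ (Ideal.Quotient.mk (J a) p) =
      Ideal.Quotient.mk (J a) (aeval ![(1 : ℂ) • X 0, (-1 : ℂ) • X 1] p) := by simpa using hφ₂
  rw [fixedPts_eq_span_image (jacobianBasis ha) (fun i => by
      simpa [jacobianBasis_apply] using apply_mk_mono₉_eq_smul φ₁ hφ₁ i),
    fixedPts_eq_span_image (jacobianBasis ha) (fun i => by
      simpa [jacobianBasis_apply] using apply_mk_mono₉_eq_smul φ₂ hφ₂ i),
    Module.Basis.span_image_inf_span_image]
  congr 2
  ext i
  simp only [Set.mem_inter_iff, Set.mem_ofPred_eq,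
    neg_one_pow_eq_one_iff_even (by norm_num : (-1 : ℂ) ≠ 1)]
  revert i; decide

end Involutions

/-- For `a² ≠ 4`, the Jacobian algebra `A = ℂ[x,y]/(∂f/∂x, ∂f/∂y)` of
`f = x⁴ + y⁴ + a·x²y²` is a `ℂ`-vector space of dimension 9 with basis the classes of
`1, x, y, x², xy, y², x²y, xy², x²y²`; the subspace invariant under the involution
induced by `(x,y) ↦ (−x,−y)` has dimension 5 with basis the classes of
`1, x², xy, y², x²y²`; and the subspace invariant under both involutions induced by
`(x,y) ↦ (−x,y)` and `(x,y) ↦ (x,−y)` has dimension 4 with basis the classes of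
`1, x², y², x²y²`. -/
theorem milnor_algebra_of_M_singularity (a : ℂ) (ha : a ^ 2 ≠ 4)
    (φ : A a →ₐ[ℂ] A a)
    (hφ : ∀ p : MvPolynomial (Fin 2) ℂ,
      φ (Ideal.Quotient.mk (J a) p) = Ideal.Quotient.mk (J a) (aeval ![-X 0, -X 1] p))
    (φ₁ : A a →ₐ[ℂ] A a)
    (hφ₁ : ∀ p : MvPolynomial (Fin 2) ℂ,
      φ₁ (Ideal.Quotient.mk (J a) p) = Ideal.Quotient.mk (J a) (aeval ![-X 0, X 1] p))
    (φ₂ : A a →ₐ[ℂ] A a)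
    (hφ₂ : ∀ p : MvPolynomial (Fin 2) ℂ,
      φ₂ (Ideal.Quotient.mk (J a) p) = Ideal.Quotient.mk (J a) (aeval ![X 0, -X 1] p)) :
    (Module.finrank ℂ (A a) = 9 ∧
      ∃ b : Module.Basis (Fin 9) ℂ (A a), ∀ i, b i = Ideal.Quotient.mk (J a) (mono₉ i)) ∧
    (Module.finrank ℂ (fixedPts φ.toLinearMap) = 5 ∧
      ∃ b : Module.Basis (Fin 5) ℂ (fixedPts φ.toLinearMap),
        ∀ i, (b i : A a) = Ideal.Quotient.mk (J a) (mono₅ i)) ∧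
    (Module.finrank ℂ (fixedPts φ₁.toLinearMap ⊓ fixedPts φ₂.toLinearMap :
        Submodule ℂ (A a)) = 4 ∧
      ∃ b : Module.Basis (Fin 4) ℂ (fixedPts φ₁.toLinearMap ⊓ fixedPts φ₂.toLinearMap :
          Submodule ℂ (A a)),
        ∀ i, (b i : A a) = Ideal.Quotient.mk (J a) (mono₄ i)) := by
  set b := jacobianBasis ha
  obtain ⟨h₅, c₅, hc₅⟩ := b.finrank_eq_and_exists_basis_of_eq_span (by decide)
    (fixedPts_negXY_eq_span ha φ hφ)
  obtain ⟨h₄, c₄, hc₄⟩ := b.finrank_eq_and_exists_basis_of_eq_span (by decide)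
    (fixedPts_negX_inf_fixedPts_negY_eq_span ha φ₁ hφ₁ φ₂ hφ₂)
  refine ⟨⟨?_, b, jacobianBasis_apply ha⟩, ⟨?_, c₅, ?_⟩, ⟨?_, c₄, ?_⟩⟩
  · simp [Module.finrank_eq_card_basis b]
  · simpa using h₅
  · simp [hc₅, b, jacobianBasis_apply, mono₅_eq]
  · simpa using h₄
  · simp [hc₄, b, jacobianBasis_apply, mono₄_eq]
end
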